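/- arXiv:1203.1704 — 2 statements merged into one kernel-verified Lean document; each statement's English description precedes it below -/
import Mathlib

section
/- With the Newton map identities, (ε_{Γ₁} ∘ δ_{Γ₁,j})(z^p - μ_j x^q) = y^{p q'} (z₁^p - μ_j^{up}), where p_i q_i = p q'_i for each i (i.e., p*q = p·q' componentwise), and consequently (τ_j ∘ ε_{Γ₁} ∘ δ_{Γ₁,j})(z^p - μ_j x^q) = y^{p*q} ((z₂ + μ_j^u)^p - μ_j^{up}), which is of order one in z₂. -/
/-!
Both maps act on `k[[x]][z]` coefficientwise by the additive substitution `substCoeff`, so on the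
binomial `z^p - μ x^q` they are determined by the images of `z^p` and of `μ x^q`. The first is
`y^{p q'} z₁^p`; the second is the monomial `μ^{1 + Σ u_i q_i} y^{p*q}`, and the Bézout-type
relation `1 + Σ u_i q_i = u p` together with `p_i q_i = p q'_i` turns it into `μ^{up} y^{p q'}`.
The Newton map is `ε ∘ δ` followed by `z₁ ↦ z₂ + μ^u`, and `(z₂ + a)^p - a^p` has no constant
term and linear coefficient `p a^{p-1}`, nonzero in characteristic zero.
-/

open Polynomial

attribute [local instance] Classical.propDecidable

variable {k : Type*} [Field k] [IsAlgClosed k] [CharZero k] {d : ℕ}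

/-- The coefficient substitution `x_i ↦ μ^{u_i} y_i^{p_i}` on power series, i.e. the effect
of `ε_{Γ₁} ∘ δ_{Γ₁,j}` on coefficients: the coefficient of `y^α` in the image is
`μ^{Σ u_i α_i/p_i}` times the coefficient of `x^{α/p}` when `p ∣ α` componentwise. -/
noncomputable def substCoeff (μ : k) (u pvec : Fin d → ℕ)
    (c : MvPowerSeries (Fin d) k) : MvPowerSeries (Fin d) k :=
  fun α : Fin d →₀ ℕ =>
    if ∀ i, pvec i ∣ α i then
      μ ^ (∑ i, u i * (α i / pvec i)) *
        MvPowerSeries.coeff (R := k) (Finsupp.equivFunOnFinite.symm fun i => α i / pvec i) c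
    else 0

/-- The Newton map `σ_{Γ₁,j} = τ_j ∘ ε_{Γ₁} ∘ δ_{Γ₁,j}` applied to
`h ∈ k[[x]][z]`: substitute `x_i ↦ μ^{u_i} y_i^{p_i}` and `z ↦ y^{q'}(z₂ + μ^u)`. -/
noncomputable def newtonMap (μ : k) (u pvec q' : Fin d → ℕ) (uu : ℕ)
    (h : Polynomial (MvPowerSeries (Fin d) k)) : Polynomial (MvPowerSeries (Fin d) k) :=
  h.sum fun n c =>
    Polynomial.C (substCoeff μ u pvec c) *
      (Polynomial.C ((MvPowerSeries.monomial (R := k) (Finsupp.equivFunOnFinite.symm q')) 1) *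
        (Polynomial.X + Polynomial.C ((MvPowerSeries.C (σ := Fin d) (R := k)) (μ ^ uu)))) ^ n


/-- The map `ε_{Γ₁} ∘ δ_{Γ₁,j}` applied to `h ∈ k[[x]][z]`: substitute
`x_i ↦ μ^{u_i} y_i^{p_i}` and `z ↦ y^{q'} z₁`. -/
noncomputable def epsDeltaMap (μ : k) (u pvec q' : Fin d → ℕ)
    (h : Polynomial (MvPowerSeries (Fin d) k)) : Polynomial (MvPowerSeries (Fin d) k) :=
  h.sum fun n c =>
    Polynomial.C (substCoeff μ u pvec c) *
      (Polynomial.C ((MvPowerSeries.monomial (R := k) (Finsupp.equivFunOnFinite.symm q')) 1) *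
        Polynomial.X) ^ n

theorem Nat.div_gcd_mul_eq_mul_div_gcd (p q : ℕ) : p / p.gcd q * q = p * (q / p.gcd q) := by
  rw [Nat.div_mul_right_comm (Nat.gcd_dvd_left p q), Nat.mul_div_assoc _ (Nat.gcd_dvd_right p q)]

namespace Polynomial

theorem sum_X_pow_sub_C_mul_pow {R S : Type*} [Ring R] [Ring S] (f : R →+ S) (B : S) (p : ℕ)
    (m : R) : (X ^ p - C m).sum (fun n c => f c * B ^ n) = f 1 * B ^ p - f m := by
  rw [sub_eq_add_neg, ← C_neg, sum_add_index _ _ _ (by simp) (by simp [add_mul]),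
    X_pow_eq_monomial, sum_monomial_index _ _ (by simp), sum_C_index (by simp)]
  simp [sub_eq_add_neg]

theorem coeff_zero_X_add_C_pow_sub_C_pow {R : Type*} [CommRing R] (a : R) (n : ℕ) :
    ((X + C a) ^ n - C (a ^ n)).coeff 0 = 0 := by
  rw [coeff_sub, coeff_X_add_C_pow, coeff_C_zero, Nat.choose_zero_right, Nat.cast_one, mul_one,
    Nat.sub_zero, sub_self]

theorem coeff_one_X_add_C_pow_sub_C_pow {R : Type*} [CommRing R] (a : R) (n : ℕ) :
    ((X + C a) ^ n - C (a ^ n)).coeff 1 = n * a ^ (n - 1) := by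
  rw [coeff_sub, coeff_X_add_C_pow, coeff_C_of_ne_zero one_ne_zero, Nat.choose_one_right, sub_zero,
    mul_comm]

end Polynomial

section substCoeff

omit [IsAlgClosed k] [CharZero k]

variable (μ : k) (u pvec : Fin d → ℕ)

theorem coeff_substCoeff (c : MvPowerSeries (Fin d) k) (α : Fin d →₀ ℕ) :
    MvPowerSeries.coeff α (substCoeff μ u pvec c) =
      if ∀ i, pvec i ∣ α i then
        μ ^ (∑ i, u i * (α i / pvec i)) *
          MvPowerSeries.coeff (Finsupp.equivFunOnFinite.symm fun i => α i / pvec i) c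
      else 0 :=
  rfl

noncomputable def substCoeffAddHom : MvPowerSeries (Fin d) k →+ MvPowerSeries (Fin d) k where
  toFun := substCoeff μ u pvec
  map_zero' := by ext α; simp [coeff_substCoeff]
  map_add' c c' := by ext α; simp only [coeff_substCoeff, map_add]; split_ifs <;> simp [mul_add]

theorem substCoeff_monomial (hpvec : ∀ i, 0 < pvec i) (β : Fin d →₀ ℕ) (a : k) :
    substCoeff μ u pvec (MvPowerSeries.monomial β a) =
      MvPowerSeries.monomial (Finsupp.equivFunOnFinite.symm fun i => pvec i * β i)
        (μ ^ (∑ i, u i * β i) * a) := by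
  ext α
  have hdiv : ∀ i, pvec i * β i / pvec i = β i := fun i => Nat.mul_div_cancel_left _ (hpvec i)
  simp only [coeff_substCoeff, MvPowerSeries.coeff_monomial]
  by_cases hα : α = Finsupp.equivFunOnFinite.symm fun i => pvec i * β i
  · subst hα
    simp [hdiv]
  · rw [if_neg hα]
    split_ifs with hdvd hβ
    · refine absurd (Finsupp.ext fun i => ?_) hα
      exact (Nat.mul_div_cancel' (hdvd i)).symm.trans congr(pvec i * $hβ i)
    · rw [mul_zero]
    · rfl

theorem substCoeff_one (hpvec : ∀ i, 0 < pvec i) : substCoeff μ u pvec 1 = 1 := by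
  have hzero : (Finsupp.equivFunOnFinite.symm fun _ : Fin d => 0) = 0 := Finsupp.ext fun _ => rfl
  simpa [hzero] using substCoeff_monomial μ u pvec hpvec 0 1

theorem epsDeltaMap_X_pow_sub_C (hpvec : ∀ i, 0 < pvec i) (q' : Fin d → ℕ) (p : ℕ)
    (c : MvPowerSeries (Fin d) k) :
    epsDeltaMap μ u pvec q' (X ^ p - C c) =
      C (MvPowerSeries.monomial (p • Finsupp.equivFunOnFinite.symm q') 1) * X ^ p
        - C (substCoeff μ u pvec c) :=
  calc epsDeltaMap μ u pvec q' (X ^ p - C c)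
      = (X ^ p - C c).sum fun n c => (C.toAddMonoidHom.comp (substCoeffAddHom μ u pvec)) c *
          (C (MvPowerSeries.monomial (Finsupp.equivFunOnFinite.symm q') 1) * X) ^ n := rfl
    _ = C (substCoeff μ u pvec 1) *
          (C (MvPowerSeries.monomial (Finsupp.equivFunOnFinite.symm q') 1) * X) ^ p
          - C (substCoeff μ u pvec c) := sum_X_pow_sub_C_mul_pow _ _ p c
    _ = _ := by
      rw [substCoeff_one μ u pvec hpvec, mul_pow, ← C_pow, MvPowerSeries.monomial_pow, one_pow,
        map_one, one_mul]

theorem newtonMap_eq_epsDeltaMap_comp (q' : Fin d → ℕ) (uu : ℕ)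
    (h : Polynomial (MvPowerSeries (Fin d) k)) :
    _root_.newtonMap μ u pvec q' uu h =
      (epsDeltaMap μ u pvec q' h).comp (X + C (MvPowerSeries.C (μ ^ uu))) := by
  simp [_root_.newtonMap, epsDeltaMap, Polynomial.sum, mul_pow]

end substCoeff

theorem newtonMap_identities_general (p : ℕ) (hp : 0 < p) (q : Fin d → ℕ)
    (pvec q' : Fin d → ℕ)
    (hpvec : ∀ i, pvec i = p / Nat.gcd p (q i)) (hq' : ∀ i, q' i = q i / Nat.gcd p (q i))
    (u : Fin d → ℕ) (uu : ℕ) (hu : 1 + ∑ i, u i * q i = uu * p)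
    (μ : k) (hμ : μ ≠ 0) :
    (∀ i, pvec i * q i = p * q' i) ∧
    epsDeltaMap μ u pvec q'
        (Polynomial.X ^ p -
          Polynomial.C ((MvPowerSeries.monomial (R := k) (Finsupp.equivFunOnFinite.symm q)) μ))
      = Polynomial.C
          ((MvPowerSeries.monomial (R := k) (Finsupp.equivFunOnFinite.symm fun i => p * q' i)) 1) *
          (Polynomial.X ^ p - Polynomial.C ((MvPowerSeries.C (σ := Fin d) (R := k)) (μ ^ (uu * p)))) ∧
    _root_.newtonMap μ u pvec q' uu
        (Polynomial.X ^ p -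
          Polynomial.C ((MvPowerSeries.monomial (R := k) (Finsupp.equivFunOnFinite.symm q)) μ))
      = Polynomial.C
          ((MvPowerSeries.monomial (R := k) (Finsupp.equivFunOnFinite.symm fun i => pvec i * q i)) 1) *
          ((Polynomial.X + Polynomial.C ((MvPowerSeries.C (σ := Fin d) (R := k)) (μ ^ uu))) ^ p -
            Polynomial.C ((MvPowerSeries.C (σ := Fin d) (R := k)) (μ ^ (uu * p)))) ∧
    ((Polynomial.X + Polynomial.C (μ ^ uu)) ^ p - Polynomial.C (μ ^ (uu * p))
        : Polynomial k).coeff 0 = 0 ∧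
    ((Polynomial.X + Polynomial.C (μ ^ uu)) ^ p - Polynomial.C (μ ^ (uu * p))
        : Polynomial k).coeff 1 ≠ 0 := by
  have hpvec_pos : ∀ i, 0 < pvec i := fun i => hpvec i ▸
    Nat.div_pos (Nat.gcd_le_left _ hp) (Nat.gcd_pos_of_pos_left _ hp)
  have hpq : ∀ i, pvec i * q i = p * q' i := fun i => by
    rw [hpvec, hq']
    exact Nat.div_gcd_mul_eq_mul_div_gcd p (q i)
  have hμ_pow : μ ^ (∑ i, u i * q i) * μ = μ ^ (uu * p) := by rw [← pow_succ, ← hu, add_comm]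
  have hεδ : epsDeltaMap μ u pvec q'
        (X ^ p - C (MvPowerSeries.monomial (Finsupp.equivFunOnFinite.symm q) μ)) =
      C (MvPowerSeries.monomial (Finsupp.equivFunOnFinite.symm fun i => p * q' i) 1) *
        (X ^ p - C (MvPowerSeries.C (μ ^ (uu * p)))) := by
    rw [epsDeltaMap_X_pow_sub_C μ u pvec hpvec_pos, substCoeff_monomial μ u pvec hpvec_pos]
    have hsmul : p • Finsupp.equivFunOnFinite.symm q' =
        Finsupp.equivFunOnFinite.symm fun i => p * q' i := Finsupp.ext fun _ => rfl
    simp only [Finsupp.coe_equivFunOnFinite_symm, hpq, hμ_pow, hsmul]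
    rw [mul_sub, ← C_mul, ← MvPowerSeries.monomial_zero_eq_C_apply,
      MvPowerSeries.monomial_mul_monomial, add_zero, one_mul]
  refine ⟨hpq, hεδ, ?_, ?_, ?_⟩
  · rw [newtonMap_eq_epsDeltaMap_comp, hεδ, mul_comp, sub_comp, X_pow_comp, C_comp, C_comp]
    simp only [hpq]
  · rw [pow_mul, coeff_zero_X_add_C_pow_sub_C_pow]
  · rw [pow_mul, coeff_one_X_add_C_pow_sub_C_pow]
    exact mul_ne_zero (Nat.cast_ne_zero.2 hp.ne') (pow_ne_zero _ (pow_ne_zero _ hμ))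

/-- the Newton map identities
`(ε∘δ)(z^p - μ x^q) = y^{pq'}(z₁^p - μ^{up})` with `p_i q_i = p q'_i`, hence
`(τ∘ε∘δ)(z^p - μ x^q) = y^{p*q}((z₂+μ^u)^p - μ^{up})`, of order one in `z₂`. -/
theorem newtonMap_identities (p : ℕ) (hp : 0 < p) (q : Fin d → ℕ)
    (hgcd : Nat.gcd p (Finset.univ.gcd q) = 1)
    (pvec q' : Fin d → ℕ)
    (hpvec : ∀ i, pvec i = p / Nat.gcd p (q i)) (hq' : ∀ i, q' i = q i / Nat.gcd p (q i))
    (u : Fin d → ℕ) (uu : ℕ) (hu : 1 + ∑ i, u i * q i = uu * p)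
    (μ : k) (hμ : μ ≠ 0) :
    (∀ i, pvec i * q i = p * q' i) ∧
    epsDeltaMap μ u pvec q'
        (Polynomial.X ^ p -
          Polynomial.C ((MvPowerSeries.monomial (R := k) (Finsupp.equivFunOnFinite.symm q)) μ))
      = Polynomial.C
          ((MvPowerSeries.monomial (R := k) (Finsupp.equivFunOnFinite.symm fun i => p * q' i)) 1) *
          (Polynomial.X ^ p - Polynomial.C ((MvPowerSeries.C (σ := Fin d) (R := k)) (μ ^ (uu * p)))) ∧
    _root_.newtonMap μ u pvec q' uu
        (Polynomial.X ^ p -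
          Polynomial.C ((MvPowerSeries.monomial (R := k) (Finsupp.equivFunOnFinite.symm q)) μ))
      = Polynomial.C
          ((MvPowerSeries.monomial (R := k) (Finsupp.equivFunOnFinite.symm fun i => pvec i * q i)) 1) *
          ((Polynomial.X + Polynomial.C ((MvPowerSeries.C (σ := Fin d) (R := k)) (μ ^ uu))) ^ p -
            Polynomial.C ((MvPowerSeries.C (σ := Fin d) (R := k)) (μ ^ (uu * p)))) ∧
    ((Polynomial.X + Polynomial.C (μ ^ uu)) ^ p - Polynomial.C (μ ^ (uu * p))
        : Polynomial k).coeff 0 = 0 ∧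
    ((Polynomial.X + Polynomial.C (μ ^ uu)) ^ p - Polynomial.C (μ ^ (uu * p))
        : Polynomial k).coeff 1 ≠ 0 :=
  newtonMap_identities_general p hp q pvec q' hpvec hq' u uu hu μ hμ
end

section
/- Separated implies comparable: if two polynomials f, g ∈ k[[x]][z] are separated (there is a suitable coordinate system in which all ends of the bicoloured Newton tree of fg that are not dead-ends are monochromatic), then their resultant Res_z(f,g)(x) equals x^α·η(x) with α ∈ ℕ^d and η(0) ≠ 0; in the special case d = 1, two reduced plane curve germs f, g ∈ k[[x]][z] without common component have Res_z(f,g)(x) = x^α·η(x) with η(0) ≠ 0. -/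
open Polynomial

variable {k : Type*} [Field k] [IsAlgClosed k] [CharZero k]

/-- The Sylvester matrix of two polynomials `f`, `g` over a commutative ring. -/
noncomputable def sylvesterMatrix {R : Type*} [CommRing R] (f g : R[X]) :
    Matrix (Fin (f.natDegree + g.natDegree)) (Fin (f.natDegree + g.natDegree)) R :=
  Matrix.of fun i j =>
    if (i : ℕ) < g.natDegree then
      (if (i : ℕ) ≤ (j : ℕ) then f.coeff ((j : ℕ) - (i : ℕ)) else 0)
    else
      (if (i : ℕ) - g.natDegree ≤ (j : ℕ) then
        g.coeff ((j : ℕ) - ((i : ℕ) - g.natDegree)) else 0)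

/-- The resultant of two polynomials, as the determinant of their Sylvester matrix. -/
noncomputable def resultantP {R : Type*} [CommRing R] (f g : R[X]) : R :=
  (sylvesterMatrix f g).det

/-!
A vanishing resultant over a domain yields a nonzero kernel vector of the Sylvester map: `p, q`
with `deg p < deg f`, `deg q < deg g` and `f * q + g * p = 0`. If `f` and `g` have no common
factor then `g ∣ q`, which the degree bound forbids unless `p = q = 0`. Hence `Res_z(f, g)` is a
nonzero power series, and a nonzero power series is `X ^ order` times a series with nonzero
constant term.
-/

/-- `sylvesterMatrix f g` is the transpose of Mathlib's `sylvester g f`, up to entries that vanish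
because they lie beyond the degree. -/
theorem resultantP_eq_resultant {R : Type*} [CommRing R] (f g : R[X]) :
    resultantP f g = resultant g f := by
  rw [resultant, ← Matrix.det_transpose,
    ← Matrix.det_reindex_self (finCongr (add_comm g.natDegree f.natDegree))]
  refine congrArg Matrix.det (Matrix.ext fun i j => ?_)
  obtain ⟨i, rfl⟩ := (finCongr (add_comm g.natDegree f.natDegree)).surjective i
  obtain ⟨j, rfl⟩ := (finCongr (add_comm g.natDegree f.natDegree)).surjective j
  induction i using Fin.addCases <;>
  · simp only [sylvesterMatrix, sylvester, Matrix.reindex_apply, Matrix.submatrix_apply,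
      Matrix.transpose_apply, Matrix.of_apply, finCongr_symm, finCongr_apply, Fin.cast_cast,
      Fin.cast_eq_self, Fin.addCases_left, Fin.addCases_right, Fin.val_cast, Fin.val_castAdd,
      Fin.val_natAdd, Set.mem_Icc, ite_and, add_tsub_cancel_left]
    split_ifs <;> first | rfl | exact coeff_eq_zero_of_natDegree_lt (by omega) | omega

namespace Polynomial

theorem exists_mul_add_mul_eq_zero_of_resultant_eq_zero {R : Type*} [CommRing R] [IsDomain R]
    {f g : R[X]} {m n : ℕ} (hf : f.natDegree ≤ m) (hg : g.natDegree ≤ n)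
    (h : resultant f g m n = 0) :
    ∃ p q : R[X], p.degree < m ∧ q.degree < n ∧ (p ≠ 0 ∨ q ≠ 0) ∧ f * q + g * p = 0 := by
  classical
  obtain ⟨v, hv, hMv⟩ := Matrix.exists_mulVec_eq_zero_iff.mpr h
  let b := ((degreeLT.basis R m).prod (degreeLT.basis R n)).reindex finSumFinEquiv
  set x := b.equivFun.symm v
  have hx : sylvesterMap f g hf hg x = 0 := by
    apply (degreeLT.basis R (m + n)).repr.injective
    ext i
    have := congrFun (LinearMap.toMatrix_mulVec_repr b (degreeLT.basis R (m + n))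
      (sylvesterMap f g hf hg) x) i
    rw [toMatrix_sylvesterMap', ← b.equivFun_apply, b.equivFun.apply_symm_apply, hMv] at this
    simpa using this.symm
  have hx0 : x ≠ 0 := b.equivFun.symm.map_ne_zero_iff.mpr hv
  obtain ⟨⟨p, hp⟩, ⟨q, hq⟩⟩ := x
  refine ⟨p, q, mem_degreeLT.mp hp, mem_degreeLT.mp hq, ?_, congrArg Subtype.val hx⟩
  contrapose! hx0
  obtain ⟨rfl, rfl⟩ := hx0
  rfl

theorem resultant_ne_zero_of_isRelPrime {R : Type*} [CommRing R] [IsDomain R]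
    [DecompositionMonoid R[X]] {f g : R[X]} (h : IsRelPrime f g) : resultant f g ≠ 0 := by
  rcases eq_or_ne g 0 with rfl | hg
  · have hf : f.natDegree = 0 := natDegree_eq_zero_of_isUnit (isRelPrime_zero_right.mp h)
    simp [hf]
  intro h0
  obtain ⟨p, q, -, hq, hpq, hfg⟩ :=
    exists_mul_add_mul_eq_zero_of_resultant_eq_zero le_rfl le_rfl h0
  have hq0 : q = 0 := by
    by_contra hq0
    have hgq : g ∣ q := h.symm.dvd_of_dvd_mul_left ⟨-p, by linear_combination hfg⟩
    exact (natDegree_le_of_dvd hgq hq0).not_gt (natDegree_lt_iff_degree_lt hq0 |>.mpr hq)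
  have hp0 : p = 0 := by simpa [hq0, hg] using hfg
  simp [hp0, hq0] at hpq

end Polynomial

theorem separated_implies_comparable_curves_general (f g : Polynomial (PowerSeries k))
    (hsep : ∀ h : Polynomial (PowerSeries k), h ∣ f → h ∣ g → IsUnit h) :
    resultantP f g ≠ 0 ∧
    ∃ (α : ℕ) (η : PowerSeries k), PowerSeries.constantCoeff η ≠ 0 ∧
      resultantP f g = PowerSeries.X ^ α * η := by
  have hres : resultantP f g ≠ 0 := by
    rw [resultantP_eq_resultant]
    exact resultant_ne_zero_of_isRelPrime fun h hg hf => hsep h hf hg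
  exact ⟨hres, _, _, PowerSeries.constantCoeff_divXPowOrder_eq_zero_iff.not.mpr hres,
    PowerSeries.X_pow_order_mul_divXPowOrder.symm⟩

/-- separated implies comparable, case `d = 1`: two reduced Weierstrass
polynomials `f, g ∈ k[[x]][z]` without common component (this is the separatedness
condition for plane curve germs) have resultant a monomial times a unit:
`Res_z(f,g)(x) = x^α·η(x)` with `η(0) ≠ 0`. -/
theorem separated_implies_comparable_curves (f g : Polynomial (PowerSeries k))
    (hfM : f.Monic) (hgM : g.Monic)
    (hfW : ∀ i < f.natDegree, PowerSeries.constantCoeff (f.coeff i) = 0)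
    (hgW : ∀ i < g.natDegree, PowerSeries.constantCoeff (g.coeff i) = 0)
    (hfred : Squarefree f) (hgred : Squarefree g)
    (hsep : ∀ h : Polynomial (PowerSeries k), h ∣ f → h ∣ g → IsUnit h) :
    resultantP f g ≠ 0 ∧
    ∃ (α : ℕ) (η : PowerSeries k), PowerSeries.constantCoeff η ≠ 0 ∧
      resultantP f g = PowerSeries.X ^ α * η :=
  separated_implies_comparable_curves_general f g hsep
end
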